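/- Let ε ∈ (0,1) and let {W_{s₁}}_{s₁∈S₁} and {W_{s₂}}_{s₂∈S₂} be two families of channels X → P(Y) over a common finite input alphabet X and output alphabet Y, with sup_{s₂∈S₂} inf_{s₁∈S₁} d(W_{s₁},W_{s₂}) < ε and sup_{s₁∈S₁} inf_{s₂∈S₂} d(W_{s₁},W_{s₂}) < ε. Then for every n ∈ ℕ, every finite set U with uniform distribution P_U, and every stochastic encoder E(xⁿ|u), letting P^{s}(u,yⁿ) = ∑_{xⁿ} W_sⁿ(yⁿ|xⁿ)E(xⁿ|u)P_U(u), it holds that |inf_{s₁∈S₁} I(U;Yⁿ‖P^{s₁}) − inf_{s₂∈S₂} I(U;Yⁿ‖P^{s₂})| ≤ n·(4ε·log|Y| + 4H₂(ε)), and the same bound holds with inf replaced by sup. -/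

import Mathlib

open Real Finset

/-- Binary entropy function (base 2). -/
noncomputable def H2 (ε : ℝ) : ℝ :=
  -(ε * Real.logb 2 ε) - (1 - ε) * Real.logb 2 (1 - ε)

/-- `p` is a probability distribution on the finite alphabet `α`. -/
def IsProb {α : Type*} [Fintype α] (p : α → ℝ) : Prop :=
  (∀ a, 0 ≤ p a) ∧ ∑ a, p a = 1

/-- `W` is a channel (stochastic matrix) from `X` to `Y`. -/
def IsChannel {X Y : Type*} [Fintype Y] (W : X → Y → ℝ) : Prop :=
  ∀ x, (∀ y, 0 ≤ W x y) ∧ ∑ y, W x y = 1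

/-- Conditional entropy `H(Y|X‖P)` (base 2) of a joint distribution `P` on `X × Y`. -/
noncomputable def condEnt {X Y : Type*} [Fintype X] [Fintype Y] (P : X × Y → ℝ) : ℝ :=
  -∑ x : X, ∑ y : Y, P (x, y) * Real.logb 2 (P (x, y) / ∑ y' : Y, P (x, y'))

/-- Mutual information `I(U;Y‖P)` (base 2) of a joint distribution `P` on `U × Y`. -/
noncomputable def mutInf {U Y : Type*} [Fintype U] [Fintype Y] (P : U × Y → ℝ) : ℝ :=
  ∑ u : U, ∑ y : Y,
    P (u, y) * Real.logb 2 (P (u, y) / ((∑ y' : Y, P (u, y')) * ∑ u' : U, P (u', y)))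

/-- Channel distance `d(W,W') = max_x ∑_y |W(y|x) − W'(y|x)|`. -/
noncomputable def dChan {X Y : Type*} [Fintype Y] (W W' : X → Y → ℝ) : ℝ :=
  ⨆ x : X, ∑ y : Y, |W x y - W' x y|

/-- Joint distribution on `U × Yⁿ` induced by the uniform distribution on `U`, a stochastic
encoder `E` and the `n`-fold memoryless extension of the channel `W`. -/
noncomputable def jointOut {X Y U : Type*} [Fintype X] [Fintype U] (n : ℕ)
    (W : X → Y → ℝ) (E : U → (Fin n → X) → ℝ) : U × (Fin n → Y) → ℝ :=
  fun p => ∑ xn : Fin n → X,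
    (∏ i : Fin n, W (xn i) (p.2 i)) * E p.1 xn * ((Fintype.card U : ℝ))⁻¹

/-!
Replace the channel in one coordinate `k` at a time. The chain rule splits `I(U; Yⁿ)` into
`I(U; Y_{≠k})`, which does not see coordinate `k`, plus `H(Y_k | Y_{≠k}) - H(Y_k | U, Y_{≠k})`.
Both conditional entropies are averages of entropies of output laws `w ∘ W` of the channel at `k`,
and replacing `W` by a channel at distance `≤ ε` moves each such law by at most `ε` in `ℓ¹`, so
Fannes' inequality bounds the change of each by `ε log|Y| + 2 H₂(ε)` (when `ε ≤ e⁻¹`). Summing over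
the `n` coordinates bounds `|I_W - I_W'|` by `2n (ε log|Y| + 2 H₂(ε))`; when `ε > e⁻¹ > 1/4` the
claimed bound already exceeds the trivial range `[0, n log|Y|]` of the mutual information.
Finally, every channel of either family has a partner in the other one at distance `< ε`, and this
transfers the bound to the infima and to the suprema.
-/

namespace Real

lemma negMulLog_le_tangent {x y : ℝ} (hx : 0 ≤ x) (hy : 0 < y) :
    negMulLog x ≤ negMulLog y + (x - y) * (-log y - 1) := by
  rcases hx.eq_or_lt with rfl | hx
  · simp only [negMulLog]; nlinarith
  · have h := log_le_sub_one_of_pos (div_pos hy hx)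
    rw [log_div hy.ne' hx.ne'] at h
    have : x * (log y - log x) ≤ y - x := by
      calc x * (log y - log x) ≤ x * (y / x - 1) := by gcongr
        _ = y - x := by field_simp
    simp only [negMulLog]; nlinarith

lemma negMulLog_add_le {a b : ℝ} (ha : 0 ≤ a) (hb : 0 ≤ b) :
    negMulLog (a + b) ≤ negMulLog a + negMulLog b := by
  rcases ha.eq_or_lt with rfl | ha
  · simp
  rcases hb.eq_or_lt with rfl | hb
  · simp
  have h₁ : a * log a ≤ a * log (a + b) := by gcongr; linarith
  have h₂ : b * log b ≤ b * log (a + b) := by gcongr; linarith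
  simp only [negMulLog]; nlinarith

lemma negMulLog_le_negMulLog_add_add {a t : ℝ} (ha : 0 ≤ a) (ht : 0 ≤ t) (h1 : a + t ≤ 1) :
    negMulLog a ≤ negMulLog (a + t) + t := by
  rcases (add_nonneg ha ht).eq_or_lt with h | h
  · obtain ⟨rfl, rfl⟩ : a = 0 ∧ t = 0 := ⟨by linarith, by linarith⟩
    simp
  have := negMulLog_le_tangent ha h
  have : t * log (a + t) ≤ 0 := mul_nonpos_of_nonneg_of_nonpos ht (log_nonpos h.le h1)
  nlinarith

lemma abs_negMulLog_sub_le {a b : ℝ} (ha0 : 0 ≤ a) (ha1 : a ≤ 1) (hb0 : 0 ≤ b) (hb1 : b ≤ 1) :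
    |negMulLog a - negMulLog b| ≤ negMulLog |a - b| + |a - b| := by
  wlog hab : a ≤ b generalizing a b
  · rw [abs_sub_comm, abs_sub_comm a]; exact this hb0 hb1 ha0 ha1 (le_of_not_ge hab)
  rw [abs_sub_comm a, abs_of_nonneg (sub_nonneg.2 hab), abs_le]
  have hsub := negMulLog_add_le ha0 (sub_nonneg.2 hab)
  have hdrop := negMulLog_le_negMulLog_add_add ha0 (sub_nonneg.2 hab) (by linarith)
  have hη := negMulLog_nonneg (sub_nonneg.2 hab) (by linarith)
  rw [add_sub_cancel] at hsub hdrop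
  constructor <;> linarith

lemma negMulLog_monotoneOn : MonotoneOn negMulLog (Set.Icc 0 (exp (-1))) := by
  rintro x ⟨hx, -⟩ y ⟨-, hy⟩ hxy
  rcases (hx.trans hxy).eq_or_lt with h | h
  · obtain rfl : x = y := by linarith
    exact le_rfl
  have hlog : log y ≤ -1 := by rwa [← log_exp (-1), log_le_log_iff h (exp_pos _)]
  have := negMulLog_le_tangent hx h
  nlinarith

lemma self_le_negMulLog {x : ℝ} (hx : 0 ≤ x) (h : x ≤ exp (-1)) : x ≤ negMulLog x := by
  rcases hx.eq_or_lt with rfl | hx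
  · simp
  have hlog : log x ≤ -1 := by rwa [← log_exp (-1), log_le_log_iff hx (exp_pos _)]
  simp only [negMulLog]; nlinarith

lemma negMulLog_le_binEntropy {p : ℝ} (h0 : 0 ≤ p) (h1 : p ≤ 1) : negMulLog p ≤ binEntropy p := by
  rw [binEntropy_eq_negMulLog_add_negMulLog_one_sub]
  linarith [negMulLog_nonneg (sub_nonneg.2 h1) (by linarith : 1 - p ≤ 1)]

lemma sub_le_mul_log_div {p q : ℝ} (hp : 0 ≤ p) (hq : 0 ≤ q) (hpq : q = 0 → p = 0) :
    p - q ≤ p * log (p / q) := by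
  rcases hq.eq_or_lt with rfl | hq
  · simp [hpq rfl]
  have h := self_sub_one_le_mul_log (div_nonneg hp hq.le)
  calc p - q = q * (p / q - 1) := by field_simp
    _ ≤ q * (p / q * log (p / q)) := by gcongr
    _ = p * log (p / q) := by field_simp

lemma sum_negMulLog_le {ι : Type*} [Fintype ι] {d : ι → ℝ} (hd : ∀ i, 0 ≤ d i) :
    ∑ i, negMulLog (d i) ≤ (∑ i, d i) * log (Fintype.card ι) + negMulLog (∑ i, d i) := by
  set δ := ∑ i, d i
  rcases (Finset.sum_nonneg fun i _ => hd i : 0 ≤ δ).eq_or_lt with h | h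
  · have hzero := (Finset.sum_eq_zero_iff_of_nonneg fun i _ => hd i).1 h.symm
    simp [δ, hzero]
  have : Nonempty ι := by
    by_contra hι
    simp [not_nonempty_iff.1 hι] at h
  have hN : (0 : ℝ) < Fintype.card ι := by exact_mod_cast Fintype.card_pos
  have hq : 0 < δ / Fintype.card ι := div_pos h hN
  have gibbs : 0 ≤ ∑ i, d i * log (d i / (δ / Fintype.card ι)) := by
    calc (0 : ℝ) = ∑ i, (d i - δ / Fintype.card ι) := by
          rw [Finset.sum_sub_distrib, Finset.sum_const, Finset.card_univ, nsmul_eq_mul]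
          field_simp; ring
      _ ≤ _ := Finset.sum_le_sum fun i _ =>
          sub_le_mul_log_div (hd i) hq.le fun h' => absurd h' hq.ne'
  have hsplit : ∀ i, d i * log (d i / (δ / Fintype.card ι)) =
      -negMulLog (d i) - d i * log (δ / Fintype.card ι) := by
    intro i
    rcases (hd i).eq_or_lt with h' | h'
    · simp [← h']
    · rw [log_div h'.ne' hq.ne', negMulLog]; ring
  simp only [hsplit, Finset.sum_sub_distrib, Finset.sum_neg_distrib, ← Finset.sum_mul] at gibbs
  rw [log_div h.ne' hN.ne'] at gibbs
  simp only [negMulLog] at gibbs ⊢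
  linarith

lemma sub_div_log_two_le_mul_logb_div {p q : ℝ} (hp : 0 ≤ p) (hq : 0 ≤ q) (hpq : q = 0 → p = 0) :
    (p - q) / log 2 ≤ p * logb 2 (p / q) := by
  rw [logb, ← mul_div_assoc]
  exact div_le_div_of_nonneg_right (sub_le_mul_log_div hp hq hpq) (log_pos one_lt_two).le

lemma logb_div_mul_eq_sub_add {b p a c m n : ℝ} (hp : p ≠ 0) (ha : a ≠ 0) (hc : c ≠ 0)
    (hm : m ≠ 0) (hn : n ≠ 0) :
    logb b (p / (a * c)) = logb b (m / (a * n)) - logb b (c / n) + logb b (p / m) := by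
  rw [logb_div hp (mul_ne_zero ha hc), logb_div hm (mul_ne_zero ha hn), logb_div hc hn,
    logb_div hp hm, logb_mul ha hc, logb_mul ha hn]
  ring

end Real

lemma IsProb.le_one {α : Type*} [Fintype α] {p : α → ℝ} (hp : IsProb p) (a : α) : p a ≤ 1 :=
  hp.2 ▸ Finset.single_le_sum (fun b _ => hp.1 b) (Finset.mem_univ a)

theorem abs_sum_negMulLog_sub_le {Y : Type*} [Fintype Y] {p q : Y → ℝ} (hp : IsProb p)
    (hq : IsProb q) {ε : ℝ} (hε : ε ≤ exp (-1)) (hpq : ∑ y, |p y - q y| ≤ ε) :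
    |∑ y, negMulLog (p y) - ∑ y, negMulLog (q y)| ≤
      ε * log (Fintype.card Y) + 2 * binEntropy ε := by
  set δ := ∑ y, |p y - q y|
  have hδ : 0 ≤ δ := Finset.sum_nonneg fun y _ => abs_nonneg _
  have hε0 : 0 ≤ ε := hδ.trans hpq
  have hε1 : ε ≤ 1 := hε.trans (exp_le_one_iff.2 (by norm_num))
  have hbin := negMulLog_le_binEntropy hε0 hε1
  calc |∑ y, negMulLog (p y) - ∑ y, negMulLog (q y)|
      ≤ ∑ y, |negMulLog (p y) - negMulLog (q y)| := by
        rw [← Finset.sum_sub_distrib]; exact Finset.abs_sum_le_sum_abs _ _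
    _ ≤ ∑ y, (negMulLog |p y - q y| + |p y - q y|) := Finset.sum_le_sum fun y _ =>
        abs_negMulLog_sub_le (hp.1 y) (hp.le_one y) (hq.1 y) (hq.le_one y)
    _ = ∑ y, negMulLog |p y - q y| + δ := Finset.sum_add_distrib
    _ ≤ δ * log (Fintype.card Y) + negMulLog δ + δ := by
        gcongr; exact sum_negMulLog_le fun y => abs_nonneg _
    _ ≤ ε * log (Fintype.card Y) + binEntropy ε + binEntropy ε := by
        have h₁ := mul_le_mul_of_nonneg_right hpq (log_natCast_nonneg (Fintype.card Y))
        have h₂ := (negMulLog_monotoneOn ⟨hδ, hpq.trans hε⟩ ⟨hε0, hε⟩ hpq).trans hbin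
        have h₃ := hpq.trans ((self_le_negMulLog hε0 hε).trans hbin)
        linarith
    _ = _ := by ring

section Channel

variable {Z Y : Type*} [Fintype Z] [Fintype Y]

lemma IsChannel.sum_sum_mul {K : Z → Y → ℝ} (hK : IsChannel K) (w : Z → ℝ) :
    ∑ y, ∑ z, w z * K z y = ∑ z, w z := by
  rw [Finset.sum_comm]; simp only [← Finset.mul_sum, (hK _).2, mul_one]

lemma IsChannel.isProb_comp {K : Z → Y → ℝ} (hK : IsChannel K) {w : Z → ℝ} (hw : IsProb w) :
    IsProb fun y => ∑ z, w z * K z y :=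
  ⟨fun y => Finset.sum_nonneg fun z _ => mul_nonneg (hw.1 z) ((hK z).1 y),
    (hK.sum_sum_mul w).trans hw.2⟩

lemma sum_abs_sum_mul_sub_le {w : Z → ℝ} (hw : ∀ z, 0 ≤ w z) {K K' : Z → Y → ℝ} {ε : ℝ}
    (hKK' : ∀ z, ∑ y, |K z y - K' z y| ≤ ε) :
    ∑ y, |∑ z, w z * K z y - ∑ z, w z * K' z y| ≤ (∑ z, w z) * ε := by
  calc ∑ y, |∑ z, w z * K z y - ∑ z, w z * K' z y|
      = ∑ y, |∑ z, w z * (K z y - K' z y)| := by simp only [mul_sub, Finset.sum_sub_distrib]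
    _ ≤ ∑ y, ∑ z, w z * |K z y - K' z y| := Finset.sum_le_sum fun y _ =>
        (Finset.abs_sum_le_sum_abs _ _).trans_eq (by simp only [abs_mul, abs_of_nonneg (hw _)])
    _ = ∑ z, w z * ∑ y, |K z y - K' z y| := by rw [Finset.sum_comm]; simp only [Finset.mul_sum]
    _ ≤ ∑ z, w z * ε := Finset.sum_le_sum fun z _ => mul_le_mul_of_nonneg_left (hKK' z) (hw z)
    _ = (∑ z, w z) * ε := (Finset.sum_mul ..).symm

theorem abs_sum_negMulLog_comp_sub_le {w : Z → ℝ} (hw : IsProb w) {K K' : Z → Y → ℝ}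
    (hK : IsChannel K) (hK' : IsChannel K') {ε : ℝ} (hε : ε ≤ exp (-1))
    (hKK' : ∀ z, ∑ y, |K z y - K' z y| ≤ ε) :
    |∑ y, negMulLog (∑ z, w z * K z y) - ∑ y, negMulLog (∑ z, w z * K' z y)| ≤
      ε * log (Fintype.card Y) + 2 * binEntropy ε :=
  abs_sum_negMulLog_sub_le (hK.isProb_comp hw) (hK'.isProb_comp hw) hε
    ((sum_abs_sum_mul_sub_le hw.1 hKK').trans_eq (by rw [hw.2, one_mul]))

end Channel

lemma dChan_nonneg {X Y : Type*} [Fintype Y] (W W' : X → Y → ℝ) : 0 ≤ dChan W W' :=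
  Real.iSup_nonneg fun _ => Finset.sum_nonneg fun _ _ => abs_nonneg _

lemma sum_abs_sub_le_dChan {X Y : Type*} [Finite X] [Fintype Y] (W W' : X → Y → ℝ) (x : X) :
    ∑ y, |W x y - W' x y| ≤ dChan W W' :=
  le_ciSup (f := fun x => ∑ y, |W x y - W' x y|) (Finite.bddAbove_range _) x

lemma dChan_le_two {X Y : Type*} [Fintype Y] {W W' : X → Y → ℝ} (hW : IsChannel W)
    (hW' : IsChannel W') : dChan W W' ≤ 2 := by
  refine Real.iSup_le (fun x => ?_) zero_le_two
  calc ∑ y, |W x y - W' x y| ≤ ∑ y, (W x y + W' x y) := Finset.sum_le_sum fun y _ =>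
        (abs_sub _ _).trans_eq (by rw [abs_of_nonneg ((hW x).1 y), abs_of_nonneg ((hW' x).1 y)])
    _ = 2 := by rw [Finset.sum_add_distrib, (hW x).2, (hW' x).2]; norm_num

lemma H2_eq_binEntropy_div (ε : ℝ) : H2 ε = binEntropy ε / log 2 := by
  simp only [H2, binEntropy_eq_negMulLog_add_negMulLog_one_sub, negMulLog, logb]; ring

lemma condEnt_eq_sum_mul_sum_negMulLog {C Y : Type*} [Fintype C] [Fintype Y] (P : C × Y → ℝ) :
    condEnt P =
      (∑ c, (∑ y, P (c, y)) * ∑ y, negMulLog (P (c, y) / ∑ y', P (c, y'))) / log 2 := by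
  unfold condEnt
  rw [Finset.sum_div, ← Finset.sum_neg_distrib]
  refine Finset.sum_congr rfl fun c _ => ?_
  rcases eq_or_ne (∑ y', P (c, y')) 0 with h | h
  · simp [h]
  · rw [Finset.mul_sum, Finset.sum_div, ← Finset.sum_neg_distrib]
    refine Finset.sum_congr rfl fun y _ => ?_
    rw [negMulLog, logb]; field_simp

theorem abs_condEnt_comp_sub_le {C Z Y : Type*} [Fintype C] [Fintype Z] [Fintype Y]
    {ν : C → Z → ℝ} (hν : ∀ c z, 0 ≤ ν c z) (hν1 : ∑ c, ∑ z, ν c z = 1)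
    {K K' : Z → Y → ℝ} (hK : IsChannel K) (hK' : IsChannel K') {ε : ℝ} (hε : ε ≤ exp (-1))
    (hKK' : ∀ z, ∑ y, |K z y - K' z y| ≤ ε) :
    |condEnt (fun p : C × Y => ∑ z, ν p.1 z * K z p.2) -
        condEnt (fun p : C × Y => ∑ z, ν p.1 z * K' z p.2)| ≤
      ε * logb 2 (Fintype.card Y) + 2 * H2 ε := by
  set B := ε * log (Fintype.card Y) + 2 * binEntropy ε
  set m : C → ℝ := fun c => ∑ z, ν c z
  have hrow : ∀ L : Z → Y → ℝ, IsChannel L → ∀ c,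
      (∑ y, ∑ z, ν c z * L z y) * ∑ y, negMulLog ((∑ z, ν c z * L z y) / ∑ y', ∑ z, ν c z * L z y')
        = m c * ∑ y, negMulLog (∑ z, ν c z / m c * L z y) := by
    intro L hL c
    simp only [hL.sum_sum_mul, Finset.sum_div, mul_div_right_comm]
    rfl
  have hrowK : ∀ c, m c * |∑ y, negMulLog (∑ z, ν c z / m c * K z y) -
      ∑ y, negMulLog (∑ z, ν c z / m c * K' z y)| ≤ m c * B := by
    intro c
    rcases (Finset.sum_nonneg fun z _ => hν c z : 0 ≤ m c).eq_or_lt with h | h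
    · simp [m, ← h]
    have hw : IsProb fun z => ν c z / m c :=
      ⟨fun z => div_nonneg (hν c z) h.le, by rw [← Finset.sum_div, div_self h.ne']⟩
    exact mul_le_mul_of_nonneg_left (abs_sum_negMulLog_comp_sub_le hw hK hK' hε hKK') h.le
  rw [condEnt_eq_sum_mul_sum_negMulLog, condEnt_eq_sum_mul_sum_negMulLog, ← sub_div, abs_div,
    abs_of_pos (log_pos one_lt_two), H2_eq_binEntropy_div, logb,
    show ε * (log (Fintype.card Y) / log 2) + 2 * (binEntropy ε / log 2) = B / log 2 by ring]
  gcongr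
  simp only [hrow K hK, hrow K' hK']
  rw [← Finset.sum_sub_distrib]
  simp only [← mul_sub]
  calc |∑ c, m c * (∑ y, negMulLog (∑ z, ν c z / m c * K z y) -
        ∑ y, negMulLog (∑ z, ν c z / m c * K' z y))|
      ≤ ∑ c, m c * B := (Finset.abs_sum_le_sum_abs _ _).trans (Finset.sum_le_sum fun c _ => by
        rw [abs_mul, abs_of_nonneg (Finset.sum_nonneg fun z _ => hν c z)]; exact hrowK c)
    _ = B := by rw [← Finset.sum_mul, hν1, one_mul]

section MutualInformation

variable {U B : Type*} [Fintype U] [Fintype B] {P : U × B → ℝ}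

lemma IsProb.sum_sum_eq_one (hP : IsProb P) : ∑ u, ∑ b, P (u, b) = 1 := by
  rw [← Fintype.sum_prod_type']; exact hP.2

lemma IsProb.sum_sum_eq_one' (hP : IsProb P) : ∑ b, ∑ u, P (u, b) = 1 := by
  rw [Finset.sum_comm]; exact hP.sum_sum_eq_one

lemma IsProb.le_sum_fst (hP : IsProb P) (u : U) (b : B) : P (u, b) ≤ ∑ b', P (u, b') :=
  Finset.single_le_sum (fun b' _ => hP.1 (u, b')) (Finset.mem_univ b)

lemma IsProb.le_sum_snd (hP : IsProb P) (u : U) (b : B) : P (u, b) ≤ ∑ u', P (u', b) :=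
  Finset.single_le_sum (fun u' _ => hP.1 (u', b)) (Finset.mem_univ u)

theorem mutInf_nonneg (hP : IsProb P) : 0 ≤ mutInf P := by
  have hsum : ∑ u, ∑ b, (P (u, b) - (∑ b', P (u, b')) * ∑ u', P (u', b)) / log 2 = 0 := by
    simp only [← Finset.sum_div, Finset.sum_sub_distrib, ← Finset.mul_sum, ← Finset.sum_mul]
    rw [hP.sum_sum_eq_one', mul_one, hP.sum_sum_eq_one, sub_self, zero_div]
  rw [mutInf, ← hsum]
  refine Finset.sum_le_sum fun u _ => Finset.sum_le_sum fun b _ => ?_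
  refine sub_div_log_two_le_mul_logb_div (hP.1 _) (mul_nonneg ((hP.1 _).trans
    (hP.le_sum_fst u b)) ((hP.1 _).trans (hP.le_sum_snd u b))) fun h => ?_
  rcases mul_eq_zero.1 h with h | h
  · exact le_antisymm (h ▸ hP.le_sum_fst u b) (hP.1 _)
  · exact le_antisymm (h ▸ hP.le_sum_snd u b) (hP.1 _)

theorem mutInf_le_logb_card (hP : IsProb P) : mutInf P ≤ logb 2 (Fintype.card B) := by
  have hterm : ∀ u b, P (u, b) * logb 2 (P (u, b) / ((∑ b', P (u, b')) * ∑ u', P (u', b))) ≤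
      -(P (u, b) * logb 2 (∑ u', P (u', b))) := by
    intro u b
    rcases (hP.1 (u, b)).eq_or_lt with h | h
    · simp [← h]
    have hA := h.trans_le (hP.le_sum_fst u b)
    have hB := h.trans_le (hP.le_sum_snd u b)
    rw [logb_div h.ne' (mul_pos hA hB).ne', logb_mul hA.ne' hB.ne']
    have := logb_le_logb_of_le one_lt_two h (hP.le_sum_fst u b)
    nlinarith
  have hmarg : IsProb fun b => ∑ u, P (u, b) :=
    ⟨fun b => Finset.sum_nonneg fun u _ => hP.1 _, hP.sum_sum_eq_one'⟩
  calc mutInf P ≤ ∑ u, ∑ b, -(P (u, b) * logb 2 (∑ u', P (u', b))) :=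
        Finset.sum_le_sum fun u _ => Finset.sum_le_sum fun b _ => hterm u b
    _ = (∑ b, negMulLog (∑ u, P (u, b))) / log 2 := by
        rw [Finset.sum_comm, Finset.sum_div]
        refine Finset.sum_congr rfl fun b _ => ?_
        rw [Finset.sum_neg_distrib, ← Finset.sum_mul, negMulLog, logb]; ring
    _ ≤ (1 * log (Fintype.card B) + negMulLog 1) / log 2 := by
        gcongr
        simpa only [hmarg.2] using sum_negMulLog_le hmarg.1
    _ = logb 2 (Fintype.card B) := by rw [negMulLog_one, one_mul, add_zero, logb]

lemma mutInf_comp_equiv {B' : Type*} [Fintype B'] (P : U × B → ℝ) (e : B' ≃ B) :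
    mutInf (fun p : U × B' => P (p.1, e p.2)) = mutInf P := by
  unfold mutInf
  refine Finset.sum_congr rfl fun u _ => ?_
  rw [← e.sum_comp]
  simp only [e.sum_comp fun b => P (u, b)]

end MutualInformation

lemma mul_logb_div_marginals_eq {U Y V : Type*} [Fintype U] [Fintype Y] [Fintype V]
    {P : U × (Y × V) → ℝ} (hP : ∀ p, 0 ≤ P p) (u : U) (y : Y) (v : V) :
    P (u, (y, v)) * logb 2 (P (u, (y, v)) /
        ((∑ y', ∑ v', P (u, (y', v'))) * ∑ u', P (u', (y, v)))) =
      P (u, (y, v)) * logb 2 ((∑ y', P (u, (y', v))) /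
        ((∑ v', ∑ y', P (u, (y', v'))) * ∑ u', ∑ y', P (u', (y', v))))
      - P (u, (y, v)) * logb 2 ((∑ u', P (u', (y, v))) / ∑ y', ∑ u', P (u', (y', v)))
      + P (u, (y, v)) * logb 2 (P (u, (y, v)) / ∑ y', P (u, (y', v))) := by
  rcases (hP (u, (y, v))).eq_or_lt with h | h
  · simp [← h]
  have hM : 0 < ∑ y', P (u, (y', v)) := h.trans_le
    (Finset.single_le_sum (f := fun y' => P (u, (y', v))) (fun _ _ => hP _) (mem_univ y))
  have hB : 0 < ∑ u', P (u', (y, v)) := h.trans_le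
    (Finset.single_le_sum (f := fun u' => P (u', (y, v))) (fun _ _ => hP _) (mem_univ u))
  have hA : 0 < ∑ y', ∑ v', P (u, (y', v')) := by
    rw [Finset.sum_comm]
    exact hM.trans_le (Finset.single_le_sum (f := fun v' => ∑ y', P (u, (y', v')))
      (fun _ _ => Finset.sum_nonneg fun _ _ => hP _) (mem_univ v))
  have hN : 0 < ∑ y', ∑ u', P (u', (y', v)) := hB.trans_le
    (Finset.single_le_sum (f := fun y' => ∑ u', P (u', (y', v)))
      (fun _ _ => Finset.sum_nonneg fun _ _ => hP _) (mem_univ y))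
  rw [Finset.sum_comm (f := fun v' y' => P (u, (y', v'))),
    Finset.sum_comm (f := fun u' y' => P (u', (y', v))),
    logb_div_mul_eq_sub_add h.ne' hA.ne' hB.ne' hM.ne' hN.ne']
  ring

theorem mutInf_eq_mutInf_add_condEnt_sub_condEnt {U Y V : Type*} [Fintype U] [Fintype Y]
    [Fintype V] (P : U × (Y × V) → ℝ) (hP : ∀ p, 0 ≤ P p) :
    mutInf P = mutInf (fun q : U × V => ∑ y, P (q.1, (y, q.2)))
      + condEnt (fun q : V × Y => ∑ u, P (u, (q.2, q.1)))
      - condEnt (fun q : (U × V) × Y => P (q.1.1, (q.2, q.1.2))) := by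
  have hI : mutInf (fun q : U × V => ∑ y, P (q.1, (y, q.2))) = ∑ u, ∑ y, ∑ v,
      P (u, (y, v)) * logb 2 ((∑ y', P (u, (y', v))) /
        ((∑ v', ∑ y', P (u, (y', v'))) * ∑ u', ∑ y', P (u', (y', v)))) := by
    simp only [mutInf, Finset.sum_mul]
    exact Finset.sum_congr rfl fun u _ => Finset.sum_comm
  have hHV : condEnt (fun q : V × Y => ∑ u, P (u, (q.2, q.1))) = -∑ u, ∑ y, ∑ v,
      P (u, (y, v)) * logb 2 ((∑ u', P (u', (y, v))) / ∑ y', ∑ u', P (u', (y', v))) := by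
    simp only [condEnt, Finset.sum_mul]
    rw [Finset.sum_comm, Finset.sum_congr rfl fun y _ => Finset.sum_comm, Finset.sum_comm]
  have hHUV : condEnt (fun q : (U × V) × Y => P (q.1.1, (q.2, q.1.2))) = -∑ u, ∑ y, ∑ v,
      P (u, (y, v)) * logb 2 (P (u, (y, v)) / ∑ y', P (u, (y', v))) := by
    simp only [condEnt, Fintype.sum_prod_type]
    exact congrArg _ (Finset.sum_congr rfl fun u _ => Finset.sum_comm)
  rw [hI, hHV, hHUV]
  simp only [mutInf, Fintype.sum_prod_type, mul_logb_div_marginals_eq hP, Finset.sum_add_distrib,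
    Finset.sum_sub_distrib]
  ring

theorem abs_mutInf_comp_sub_le {U V Z Y : Type*} [Fintype U] [Fintype V] [Fintype Z] [Fintype Y]
    {μ : U → V → Z → ℝ} (hμ : ∀ u v z, 0 ≤ μ u v z) (hμ1 : ∑ u, ∑ v, ∑ z, μ u v z = 1)
    {K K' : Z → Y → ℝ} (hK : IsChannel K) (hK' : IsChannel K') {ε : ℝ} (hε : ε ≤ exp (-1))
    (hKK' : ∀ z, ∑ y, |K z y - K' z y| ≤ ε) :
    |mutInf (fun p : U × (Y × V) => ∑ z, μ p.1 p.2.2 z * K z p.2.1) -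
        mutInf (fun p : U × (Y × V) => ∑ z, μ p.1 p.2.2 z * K' z p.2.1)| ≤
      2 * (ε * logb 2 (Fintype.card Y) + 2 * H2 ε) := by
  have hP : ∀ L : Z → Y → ℝ, IsChannel L → ∀ p : U × (Y × V),
      0 ≤ ∑ z, μ p.1 p.2.2 z * L z p.2.1 :=
    fun L hL p => Finset.sum_nonneg fun z _ => mul_nonneg (hμ _ _ _) ((hL z).1 _)
  have hV : ∀ L : Z → Y → ℝ, (fun q : V × Y => ∑ u, ∑ z, μ u q.1 z * L z q.2) =
      fun q => ∑ z, (∑ u, μ u q.1 z) * L z q.2 := by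
    intro L; funext q; rw [Finset.sum_comm]; simp only [Finset.sum_mul]
  have hHV := abs_condEnt_comp_sub_le (ν := fun v z => ∑ u, μ u v z)
    (fun v z => Finset.sum_nonneg fun u _ => hμ u v z)
    (((Finset.sum_congr rfl fun v _ => Finset.sum_comm).trans Finset.sum_comm).trans hμ1)
    hK hK' hε hKK'
  have hHUV := abs_condEnt_comp_sub_le (ν := fun (c : U × V) z => μ c.1 c.2 z)
    (fun c z => hμ c.1 c.2 z) (by rwa [Fintype.sum_prod_type]) hK hK' hε hKK'
  rw [mutInf_eq_mutInf_add_condEnt_sub_condEnt _ (hP K hK),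
    mutInf_eq_mutInf_add_condEnt_sub_condEnt _ (hP K' hK')]
  simp only [hK.sum_sum_mul, hK'.sum_sum_mul, hV] at hHV ⊢
  rw [abs_le] at hHV hHUV ⊢
  constructor <;> linarith [hHV.1, hHV.2, hHUV.1, hHUV.2]

lemma IsChannel.pi {ι X Y : Type*} [Fintype ι] [DecidableEq ι] [Fintype Y]
    {W : ι → X → Y → ℝ} (hW : ∀ i, IsChannel (W i)) :
    IsChannel fun (xs : ι → X) (ys : ι → Y) => ∏ i, W i (xs i) (ys i) := fun xs =>
  ⟨fun ys => Finset.prod_nonneg fun i _ => (hW i (xs i)).1 _, by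
    rw [← Fintype.prod_sum]; exact Finset.prod_eq_one fun i _ => (hW i (xs i)).2⟩

noncomputable def jointOutSeq {X Y U : Type*} [Fintype X] [Fintype U] (n : ℕ)
    (W : Fin n → X → Y → ℝ) (E : U → (Fin n → X) → ℝ) : U × (Fin n → Y) → ℝ :=
  fun p => ∑ xn : Fin n → X,
    (∏ i : Fin n, W i (xn i) (p.2 i)) * E p.1 xn * ((Fintype.card U : ℝ))⁻¹

/-- `jointOutSeqExcept k W E u v z` is the probability that the message is `u`, the outputs off
coordinate `k` are `v`, and the input at coordinate `k` is `z`. -/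
noncomputable def jointOutSeqExcept {X Y U : Type*} [Fintype X] [Fintype U] {n : ℕ} (k : Fin n)
    (W : {j // j ≠ k} → X → Y → ℝ) (E : U → (Fin n → X) → ℝ) (u : U)
    (v : {j // j ≠ k} → Y) (z : X) : ℝ :=
  ∑ xr : {j // j ≠ k} → X, (∏ j, W j (xr j) (v j)) *
    E u ((Equiv.piSplitAt k fun _ => X).symm (z, xr)) * ((Fintype.card U : ℝ))⁻¹

section Memoryless

variable {X Y U : Type*} [Fintype X] [Fintype U] {n : ℕ} {E : U → (Fin n → X) → ℝ}

lemma jointOutSeq_piSplitAt_symm {W : Fin n → X → Y → ℝ} (k : Fin n) (u : U) (y : Y)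
    (v : {j // j ≠ k} → Y) :
    jointOutSeq n W E (u, (Equiv.piSplitAt k fun _ => Y).symm (y, v)) =
      ∑ z, jointOutSeqExcept k (fun j => W j) E u v z * W k z y := by
  simp only [jointOutSeq, jointOutSeqExcept, Finset.sum_mul]
  rw [← (Equiv.piSplitAt k fun _ => X).symm.sum_comp, Fintype.sum_prod_type]
  refine Finset.sum_congr rfl fun z _ => Finset.sum_congr rfl fun xr _ => ?_
  rw [Fintype.prod_eq_mul_prod_subtype_ne _ k]
  have hoff : ∀ j : {j // j ≠ k}, W j ((Equiv.piSplitAt k fun _ => X).symm (z, xr) j)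
      ((Equiv.piSplitAt k fun _ => Y).symm (y, v) j) = W j (xr j) (v j) := fun j => by
    simp [Equiv.piSplitAt_symm_apply, j.2]
  simp only [hoff]
  simp only [Equiv.piSplitAt_symm_apply, dite_true]
  ring

variable [Fintype Y] [Nonempty U]

lemma isProb_jointOutSeq {W : Fin n → X → Y → ℝ} (hW : ∀ i, IsChannel (W i))
    (hE : ∀ u, IsProb (E u)) :
    IsProb (jointOutSeq n W E) := by
  refine ⟨fun p => Finset.sum_nonneg fun xn _ => mul_nonneg (mul_nonneg
    ((IsChannel.pi hW xn).1 _) ((hE p.1).1 xn)) (by positivity), ?_⟩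
  have hrow : ∀ u, ∑ yn, jointOutSeq n W E (u, yn) = ((Fintype.card U : ℝ))⁻¹ := fun u => by
    simp only [jointOutSeq]
    rw [Finset.sum_comm]
    simp only [← Finset.sum_mul, (IsChannel.pi hW _).2, one_mul, (hE u).2]
  rw [Fintype.sum_prod_type]
  simp only [hrow, Finset.sum_const, Finset.card_univ, nsmul_eq_mul]
  exact mul_inv_cancel₀ (by exact_mod_cast Fintype.card_ne_zero)

lemma sum_jointOutSeqExcept {W : Fin n → X → Y → ℝ} (hW : ∀ i, IsChannel (W i))
    (hE : ∀ u, IsProb (E u)) (k : Fin n) :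
    ∑ u, ∑ v, ∑ z, jointOutSeqExcept k (fun j => W j) E u v z = 1 := by
  rw [← (isProb_jointOutSeq hW hE).sum_sum_eq_one]
  refine Finset.sum_congr rfl fun u _ => ?_
  rw [← (Equiv.piSplitAt k fun _ => Y).symm.sum_comp, Fintype.sum_prod_type_right]
  simp only [jointOutSeq_piSplitAt_symm, (hW k).sum_sum_mul]

theorem abs_mutInf_jointOutSeq_sub_update_le {W : Fin n → X → Y → ℝ}
    (hW : ∀ i, IsChannel (W i)) (hE : ∀ u, IsProb (E u)) (k : Fin n) {K : X → Y → ℝ}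
    (hK : IsChannel K) {ε : ℝ} (hε : ε ≤ exp (-1)) (hd : ∀ x, ∑ y, |W k x y - K x y| ≤ ε) :
    |mutInf (jointOutSeq n W E) - mutInf (jointOutSeq n (Function.update W k K) E)| ≤
      2 * (ε * logb 2 (Fintype.card Y) + 2 * H2 ε) := by
  have hsplit : ∀ W' : Fin n → X → Y → ℝ, mutInf (jointOutSeq n W' E) =
      mutInf fun p : U × (Y × ({j // j ≠ k} → Y)) =>
        ∑ z, jointOutSeqExcept k (fun j => W' j) E p.1 p.2.2 z * W' k z p.2.1 := fun W' => by
    rw [← mutInf_comp_equiv (jointOutSeq n W' E) (Equiv.piSplitAt k fun _ => Y).symm]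
    congr 1
    funext ⟨u, y, v⟩
    exact jointOutSeq_piSplitAt_symm k u y v
  have hoff : (fun j : {j // j ≠ k} => Function.update W k K j) = fun j : {j // j ≠ k} => W j :=
    funext fun j => Function.update_of_ne j.2 _ _
  rw [hsplit, hsplit, hoff, Function.update_self]
  refine abs_mutInf_comp_sub_le (fun u v z => ?_) (sum_jointOutSeqExcept hW hE k) (hW k) hK hε hd
  exact Finset.sum_nonneg fun xr _ => mul_nonneg (mul_nonneg (Finset.prod_nonneg fun j _ =>
    (hW j (xr j)).1 _) ((hE u).1 _)) (by positivity)

theorem abs_mutInf_jointOut_sub_le_of_le_exp {W W' : X → Y → ℝ} (hW : IsChannel W)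
    (hW' : IsChannel W') (hE : ∀ u, IsProb (E u)) {ε : ℝ} (hε : ε ≤ exp (-1))
    (hd : ∀ x, ∑ y, |W x y - W' x y| ≤ ε) :
    |mutInf (jointOut n W E) - mutInf (jointOut n W' E)| ≤
      n * (2 * (ε * logb 2 (Fintype.card Y) + 2 * H2 ε)) := by
  let hybrid : ℕ → Fin n → X → Y → ℝ := fun m i => if (i : ℕ) < m then W' else W
  have hchannel : ∀ m i, IsChannel (hybrid m i) := fun m i => by
    dsimp only [hybrid]; split_ifs <;> assumption
  have hupdate : ∀ {m} (hm : m < n), hybrid (m + 1) = Function.update (hybrid m) ⟨m, hm⟩ W' := by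
    intro m hm
    funext i
    rw [Function.update_apply]
    simp only [hybrid, Fin.ext_iff]
    split_ifs <;> first | rfl | omega
  have htelescope := dist_le_range_sum_of_dist_le
    (f := fun m => mutInf (jointOutSeq n (hybrid m) E)) n (d := fun _ => _) fun {m} hm => by
      rw [Real.dist_eq, hupdate hm]
      exact abs_mutInf_jointOutSeq_sub_update_le (hchannel m) hE ⟨m, hm⟩ hW' hε
        (by simpa [hybrid] using hd)
  simp only [hybrid, not_lt_zero, ↓reduceIte, Fin.is_lt, Real.dist_eq, Finset.sum_const,
    Finset.card_range, nsmul_eq_mul] at htelescope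
  exact htelescope

lemma isProb_jointOut {W : X → Y → ℝ} (hW : IsChannel W) (hE : ∀ u, IsProb (E u)) :
    IsProb (jointOut n W E) :=
  isProb_jointOutSeq (fun _ => hW) hE

lemma mutInf_jointOut_mem_Icc {W : X → Y → ℝ} (hW : IsChannel W) (hE : ∀ u, IsProb (E u)) :
    mutInf (jointOut n W E) ∈ Set.Icc 0 (n * logb 2 (Fintype.card Y)) := by
  refine ⟨mutInf_nonneg (isProb_jointOut hW hE),
    (mutInf_le_logb_card (isProb_jointOut hW hE)).trans_eq ?_⟩
  rw [Fintype.card_fun, Fintype.card_fin, Nat.cast_pow, logb_pow]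

theorem abs_mutInf_jointOut_sub_le {W W' : X → Y → ℝ} (hW : IsChannel W) (hW' : IsChannel W')
    (hE : ∀ u, IsProb (E u)) {ε : ℝ} (hε : ε ≤ 1) (hd : dChan W W' ≤ ε) :
    |mutInf (jointOut n W E) - mutInf (jointOut n W' E)| ≤
      n * (4 * ε * logb 2 (Fintype.card Y) + 4 * H2 ε) := by
  have hε0 : 0 ≤ ε := (dChan_nonneg W W').trans hd
  have hL : 0 ≤ logb 2 (Fintype.card Y) :=
    div_nonneg (log_natCast_nonneg _) (log_pos one_lt_two).le
  have hH : 0 ≤ H2 ε := by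
    rw [H2_eq_binEntropy_div]; exact div_nonneg (binEntropy_nonneg hε0 hε) (log_pos one_lt_two).le
  by_cases hsmall : ε ≤ exp (-1)
  · refine (abs_mutInf_jointOut_sub_le_of_le_exp hW hW' hE hsmall fun x =>
      (sum_abs_sub_le_dChan W W' x).trans hd).trans ?_
    gcongr
    nlinarith
  · -- for `ε > exp (-1) > 1/4` the bound exceeds the trivial `n * logb 2 |Y|`
    have h4ε : 1 ≤ 4 * ε := by
      have : (4 : ℝ)⁻¹ ≤ exp (-1) :=
        exp_neg 1 ▸ inv_anti₀ (exp_pos 1) (exp_one_lt_d9.le.trans (by norm_num))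
      linarith
    have hn : (n : ℝ) * logb 2 (Fintype.card Y) ≤
        n * (4 * ε * logb 2 (Fintype.card Y) + 4 * H2 ε) := by
      gcongr; nlinarith
    have hI := mutInf_jointOut_mem_Icc (n := n) hW hE
    have hI' := mutInf_jointOut_mem_Icc (n := n) hW' hE
    exact (abs_sub_le_of_nonneg_of_le hI.1 hI.2 hI'.1 hI'.2).trans hn

end Memoryless

section IndexedBounds

variable {ι κ : Type*} [Nonempty ι] [Nonempty κ] {f : ι → ℝ} {g : κ → ℝ} {B : ℝ}

lemma abs_ciInf_sub_ciInf_le (hf : BddBelow (Set.range f)) (hg : BddBelow (Set.range g))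
    (hfg : ∀ i, ∃ j, |f i - g j| ≤ B) (hgf : ∀ j, ∃ i, |f i - g j| ≤ B) :
    |(⨅ i, f i) - ⨅ j, g j| ≤ B := by
  have h₁ : (⨅ i, f i) - B ≤ ⨅ j, g j := le_ciInf fun j => by
    obtain ⟨i, hi⟩ := hgf j
    linarith [ciInf_le hf i, (abs_le.1 hi).2]
  have h₂ : (⨅ j, g j) - B ≤ ⨅ i, f i := le_ciInf fun i => by
    obtain ⟨j, hj⟩ := hfg i
    linarith [ciInf_le hg j, (abs_le.1 hj).1]
  exact abs_sub_le_iff.2 ⟨by linarith, by linarith⟩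

lemma abs_ciSup_sub_ciSup_le (hf : BddAbove (Set.range f)) (hg : BddAbove (Set.range g))
    (hfg : ∀ i, ∃ j, |f i - g j| ≤ B) (hgf : ∀ j, ∃ i, |f i - g j| ≤ B) :
    |(⨆ i, f i) - ⨆ j, g j| ≤ B := by
  have h₁ : (⨆ i, f i) ≤ (⨆ j, g j) + B := ciSup_le fun i => by
    obtain ⟨j, hj⟩ := hfg i
    linarith [le_ciSup hg j, (abs_le.1 hj).2]
  have h₂ : (⨆ j, g j) ≤ (⨆ i, f i) + B := ciSup_le fun j => by
    obtain ⟨i, hi⟩ := hgf j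
    linarith [le_ciSup hf i, (abs_le.1 hi).1]
  exact abs_sub_le_iff.2 ⟨by linarith, by linarith⟩

end IndexedBounds

lemma exists_lt_of_ciSup_ciInf_lt {ι κ : Type*} [Nonempty ι] {d : ι → κ → ℝ} {C a : ℝ}
    (h0 : ∀ i j, 0 ≤ d i j) (hC : ∀ i j, d i j ≤ C) (h : ⨆ j, ⨅ i, d i j < a) (j : κ) :
    ∃ i, d i j < a :=
  exists_lt_of_ciInf_lt <| (le_ciSup ⟨C, Set.forall_mem_range.2 fun j' =>
    (ciInf_le ⟨0, Set.forall_mem_range.2 fun i => h0 i j'⟩ (Classical.arbitrary ι)).trans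
      (hC _ _)⟩ j).trans_lt h

/-- continuity of the worst-case (inf) and best-case (sup) mutual information
over the uncertainty sets of two close compound channels. -/
theorem compound_mutual_information_continuity {X Y : Type*} [Fintype X] [Fintype Y]
    {S₁ S₂ : Type*} [Nonempty S₁] [Nonempty S₂]
    {ε : ℝ} (hε : ε ∈ Set.Ioo (0 : ℝ) 1)
    (W₁ : S₁ → X → Y → ℝ) (W₂ : S₂ → X → Y → ℝ)
    (hW₁ : ∀ s₁, IsChannel (W₁ s₁)) (hW₂ : ∀ s₂, IsChannel (W₂ s₂))
    (hd₁ : (⨆ s₂ : S₂, ⨅ s₁ : S₁, dChan (W₁ s₁) (W₂ s₂)) < ε)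
    (hd₂ : (⨆ s₁ : S₁, ⨅ s₂ : S₂, dChan (W₁ s₁) (W₂ s₂)) < ε)
    (n : ℕ) {U : Type*} [Fintype U] [Nonempty U]
    (E : U → (Fin n → X) → ℝ)
    (hE : ∀ u, (∀ xn, 0 ≤ E u xn) ∧ ∑ xn : Fin n → X, E u xn = 1) :
    |(⨅ s₁ : S₁, mutInf (jointOut n (W₁ s₁) E)) -
        (⨅ s₂ : S₂, mutInf (jointOut n (W₂ s₂) E))| ≤
      (n : ℝ) * (4 * ε * Real.logb 2 (Fintype.card Y) + 4 * H2 ε) ∧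
    |(⨆ s₁ : S₁, mutInf (jointOut n (W₁ s₁) E)) -
        (⨆ s₂ : S₂, mutInf (jointOut n (W₂ s₂) E))| ≤
      (n : ℝ) * (4 * ε * Real.logb 2 (Fintype.card Y) + 4 * H2 ε) := by
  have hpair : ∀ s₁ s₂, dChan (W₁ s₁) (W₂ s₂) < ε →
      |mutInf (jointOut n (W₁ s₁) E) - mutInf (jointOut n (W₂ s₂) E)| ≤
        n * (4 * ε * logb 2 (Fintype.card Y) + 4 * H2 ε) := fun s₁ s₂ h =>
    abs_mutInf_jointOut_sub_le (hW₁ s₁) (hW₂ s₂) hE hε.2.le h.le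
  have hclose₁ := fun s₁ => (exists_lt_of_ciSup_ciInf_lt (fun _ _ => dChan_nonneg _ _)
    (fun s₂ s₁ => dChan_le_two (hW₁ s₁) (hW₂ s₂)) hd₂ s₁).imp fun s₂ => hpair s₁ s₂
  have hclose₂ := fun s₂ => (exists_lt_of_ciSup_ciInf_lt (fun _ _ => dChan_nonneg _ _)
    (fun s₁ s₂ => dChan_le_two (hW₁ s₁) (hW₂ s₂)) hd₁ s₂).imp fun s₁ => hpair s₁ s₂
  have hrange₁ := Set.range_subset_iff.2 fun s₁ => mutInf_jointOut_mem_Icc (hW₁ s₁) hE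
  have hrange₂ := Set.range_subset_iff.2 fun s₂ => mutInf_jointOut_mem_Icc (hW₂ s₂) hE
  exact ⟨abs_ciInf_sub_ciInf_le (bddBelow_Icc.mono hrange₁) (bddBelow_Icc.mono hrange₂)
      hclose₁ hclose₂,
    abs_ciSup_sub_ciSup_le (bddAbove_Icc.mono hrange₁) (bddAbove_Icc.mono hrange₂)
      hclose₁ hclose₂⟩
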